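/- Let p > 0, λ > 0, μ > 0, q > 0, r > 0, and let W^{(q)} be the explicit q-scale function of the Cramér–Lundberg model. For −pr ≤ x ≤ 0: e^{−λr}[ p W^{(q)}(x+pr) + ∫₀^{pr+x} W^{(q)}(x+pr−y) ((pr−y)/r) e^{−μy} Σ_{m=0}^∞ ((μλr)^{m+1}/(m!(m+1)!)) y^m dy ] = e^{−λr}[ p W^{(q)}(x+pr) + A⁻ e^{q⁺(q)(x+pr)} Σ_{m=0}^∞ ((pr(q⁻(q)+μ))^m/(m!(m+1)!)) γ(m+1, (pr+x)(q⁺(q)+μ)) (pr(q⁺(q)+μ) − (m+1)) − A⁺ e^{q⁻(q)(x+pr)} Σ_{m=0}^∞ ((pr(q⁺(q)+μ))^m/(m!(m+1)!)) γ(m+1, (pr+x)(q⁻(q)+μ)) (pr(q⁻(q)+μ) − (m+1)) ]. -/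

import Mathlib

open MeasureTheory

/- Cramér–Lundberg model: X_t = pt − Σ_{i≤N_t}U_i with Poisson(λ) arrivals and
   Exp(μ) claims.  The law of X_r is that of pr − S_r with
   ℙ(S_r ∈ dy) = e^{−λr}(δ₀(dy) + e^{−μy}Σ_m ((μλr)^{m+1}/(m!(m+1)!))y^m dy);
   since W^{(q)}(x+z) = 0 for z ≤ −x, the left-hand side below equals
   V^{(q)}(x) = ∫₀^∞ W^{(q)}(x+z)(z/r)ℙ(X_r ∈ dz) for −pr ≤ x ≤ 0. -/

noncomputable def qp (p lam μ q : ℝ) : ℝ :=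
  (q + lam - μ * p + Real.sqrt ((q + lam - μ * p) ^ 2 + 4 * p * q * μ)) / (2 * p)

noncomputable def qm (p lam μ q : ℝ) : ℝ :=
  (q + lam - μ * p - Real.sqrt ((q + lam - μ * p) ^ 2 + 4 * p * q * μ)) / (2 * p)

noncomputable def Ap (p lam μ q : ℝ) : ℝ := (μ + qp p lam μ q) / (qp p lam μ q - qm p lam μ q)

noncomputable def Am (p lam μ q : ℝ) : ℝ := (μ + qm p lam μ q) / (qp p lam μ q - qm p lam μ q)

/-- The q-scale function W^{(q)} of X (its formula on [0,∞)). -/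
noncomputable def Wq (p lam μ q x : ℝ) : ℝ :=
  1 / p * (Ap p lam μ q * Real.exp (qp p lam μ q * x) -
    Am p lam μ q * Real.exp (qm p lam μ q * x))

/-- Lower incomplete gamma function γ(a,x) = ∫₀ˣ t^{a−1}e^{−t} dt. -/
noncomputable def lowerGamma (a x : ℝ) : ℝ :=
  ∫ t in (0 : ℝ)..x, t ^ (a - 1) * Real.exp (-t)

section ParisianAux
open intervalIntegral



noncomputable def G (m : ℕ) (z : ℝ) : ℝ := ∫ t in (0:ℝ)..z, t ^ m * Real.exp (-t)

lemma contPE (m : ℕ) : Continuous fun t : ℝ => t ^ m * Real.exp (-t) := by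
  exact (continuous_pow m).mul (Real.continuous_exp.comp continuous_neg)

lemma lowerGamma_eq (m : ℕ) (z : ℝ) : lowerGamma ((m:ℝ)+1) z = G m z := by
  unfold lowerGamma G
  apply intervalIntegral.integral_congr
  intro t _
  simp only [show ((m:ℝ)+1) - 1 = ((m:ℕ):ℝ) by ring, Real.rpow_natCast]

lemma G_succ (m : ℕ) (z : ℝ) :
    G (m+1) z = ((m:ℝ)+1) * G m z - z^(m+1) * Real.exp (-z) := by
  have h : ∀ t : ℝ, HasDerivAt (fun t : ℝ => -(t^(m+1) * Real.exp (-t)))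
      (t^(m+1) * Real.exp (-t) - ((m:ℝ)+1) * (t ^ m * Real.exp (-t))) t := by
    intro t
    have h1 : HasDerivAt (fun t : ℝ => t^(m+1)) (((m:ℝ)+1) * t^m) t := by
      simpa using hasDerivAt_pow (m+1) t
    have h2 : HasDerivAt (fun t : ℝ => Real.exp (-t)) (-Real.exp (-t)) t := by
      simpa [Function.comp_def] using (Real.hasDerivAt_exp (-t)).comp t (hasDerivAt_neg t)
    have : HasDerivAt (fun t : ℝ => -(t^(m+1) * Real.exp (-t)))
        (-(((m:ℝ)+1) * t^m * Real.exp (-t) + t^(m+1) * -Real.exp (-t))) t := (h1.mul h2).neg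
    convert this using 1
    ring
  have key := intervalIntegral.integral_eq_sub_of_hasDerivAt
      (f := fun t : ℝ => -(t^(m+1) * Real.exp (-t))) (a := 0) (b := z)
      (fun t _ => h t)
      (((contPE (m+1)).sub (continuous_const.mul (contPE m))).intervalIntegrable 0 z)
  rw [intervalIntegral.integral_sub ((contPE (m+1)).intervalIntegrable 0 z)
      (((contPE m).intervalIntegrable 0 z).const_mul _)] at key
  have h0 : (0:ℝ)^(m+1) * Real.exp (-(0:ℝ)) = 0 := by simp
  rw [intervalIntegral.integral_const_mul] at key
  unfold G
  have := key
  simp only [neg_zero, Real.exp_zero, zero_pow (Nat.succ_ne_zero m), zero_mul, neg_zero,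
    sub_zero, mul_one] at this
  linarith [this]

lemma integral_pow_exp (m : ℕ) {α : ℝ} (hα : α ≠ 0) (b : ℝ) :
    ∫ y in (0:ℝ)..b, y ^ m * Real.exp (-(α * y)) = G m (α * b) / α ^ (m+1) := by
  have h := intervalIntegral.integral_comp_mul_left
      (f := fun t : ℝ => t ^ m * Real.exp (-t)) (a := 0) (b := b) (c := α) hα
  simp only [mul_zero] at h
  have h2 : ∫ y in (0:ℝ)..b, (α * y) ^ m * Real.exp (-(α * y))
      = α ^ m * ∫ y in (0:ℝ)..b, y ^ m * Real.exp (-(α * y)) := by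
    rw [← intervalIntegral.integral_const_mul]
    apply intervalIntegral.integral_congr
    intro t _
    simp only [mul_pow]; ring
  rw [h2] at h
  have : G m (α * b) = α * (α ^ m * ∫ y in (0:ℝ)..b, y ^ m * Real.exp (-(α * y))) := by
    rw [h, smul_eq_mul]
    field_simp
    rfl
  rw [this]
  field_simp
  ring

lemma integral_lin_pow_exp (m : ℕ) {α : ℝ} (hα : α ≠ 0) (c b : ℝ) :
    ∫ y in (0:ℝ)..b, (c - y) * y ^ m * Real.exp (-(α * y))
      = (c * α - ((m:ℝ)+1)) * G m (α*b) / α ^ (m+2)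
        + b^(m+1) * Real.exp (-(α*b)) / α := by
  have h1 := integral_pow_exp m hα b
  have h2 := integral_pow_exp (m+1) hα b
  rw [G_succ] at h2
  have splitfun : ∀ y : ℝ, (c - y) * y ^ m * Real.exp (-(α * y))
      = c * (y ^ m * Real.exp (-(α * y))) - y ^ (m+1) * Real.exp (-(α * y)) := by
    intro y; ring
  have cont1 : Continuous fun y : ℝ => y ^ m * Real.exp (-(α * y)) := by
    exact (continuous_pow m).mul (Real.continuous_exp.comp (continuous_const.mul continuous_id).neg)
  have cont2 : Continuous fun y : ℝ => y ^ (m+1) * Real.exp (-(α * y)) := by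
    exact (continuous_pow (m+1)).mul (Real.continuous_exp.comp (continuous_const.mul continuous_id).neg)
  rw [intervalIntegral.integral_congr (g := fun y =>
      c * (y ^ m * Real.exp (-(α * y))) - y ^ (m+1) * Real.exp (-(α * y)))
      (fun y _ => splitfun y),
    intervalIntegral.integral_sub ((cont1.intervalIntegrable 0 b).const_mul c)
      (cont2.intervalIntegrable 0 b),
    intervalIntegral.integral_const_mul, h1, h2]
  field_simp
  ring

lemma G_nonneg (m : ℕ) {z : ℝ} (hz : 0 ≤ z) : 0 ≤ G m z := by
  unfold G
  apply intervalIntegral.integral_nonneg hz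
  intro t ht
  have : 0 ≤ t := ht.1
  positivity

lemma G_le (m : ℕ) {z : ℝ} (hz : 0 ≤ z) : G m z ≤ z^(m+1) / ((m:ℝ)+1) := by
  have h : G m z ≤ ∫ t in (0:ℝ)..z, t ^ m := by
    apply intervalIntegral.integral_mono_on hz
      ((contPE m).intervalIntegrable 0 z) ((continuous_pow m).intervalIntegrable 0 z)
    intro t ht
    have h1 : Real.exp (-t) ≤ 1 := Real.exp_le_one_iff.mpr (by linarith [ht.1])
    have h2 : (0:ℝ) ≤ t ^ m := pow_nonneg ht.1 m
    calc t ^ m * Real.exp (-t) ≤ t ^ m * 1 := by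
          exact mul_le_mul_of_nonneg_left h1 h2
      _ = t ^ m := by ring
  rw [integral_pow] at h
  simpa using h




lemma scalars (p lam μ q : ℝ) (hp : 0 < p) (hlam : 0 < lam) (hμ : 0 < μ) (hq : 0 < q) :
    0 < qp p lam μ q + μ ∧ 0 < qm p lam μ q + μ ∧ 0 < qp p lam μ q - qm p lam μ q ∧
      (qp p lam μ q + μ) * (qm p lam μ q + μ) * p = lam * μ := by
  have hD : 0 < (q + lam - μ * p) ^ 2 + 4 * p * q * μ := by positivity
  set S := Real.sqrt ((q + lam - μ * p) ^ 2 + 4 * p * q * μ) with hSdef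
  have hS2 : S ^ 2 = (q + lam - μ * p) ^ 2 + 4 * p * q * μ := Real.sq_sqrt hD.le
  have hS0 : 0 < S := Real.sqrt_pos.mpr hD
  have hSlt : S < q + lam + μ * p := by
    have h' : (q + lam - μ * p) ^ 2 + 4 * p * q * μ < (q + lam + μ * p) ^ 2 := by nlinarith [mul_pos (mul_pos hp hμ) hlam]
    have h2 := Real.sqrt_lt_sqrt hD.le h'
    rwa [Real.sqrt_sq (by positivity)] at h2
  have hqpe : qp p lam μ q + μ = (q + lam + μ * p + S) / (2 * p) := by
    rw [qp, ← hSdef]; field_simp; ring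
  have hqme : qm p lam μ q + μ = (q + lam + μ * p - S) / (2 * p) := by
    rw [qm, ← hSdef]; field_simp; ring
  refine ⟨by rw [hqpe]; positivity,
    by rw [hqme]; exact div_pos (by linarith) (by linarith), ?_, ?_⟩
  · have hdiff : qp p lam μ q - qm p lam μ q = S / p := by
      rw [qp, qm, ← hSdef]; field_simp; ring
    rw [hdiff]; positivity
  · rw [hqpe, hqme, div_mul_div_comm, div_mul_eq_mul_div, div_eq_iff (by positivity)]
    linear_combination (-p) * hS2

lemma key_alg (m : ℕ) {pr α β Δ d Ep Em : ℝ} (b Gα Gβ eμ Eα Eβ : ℝ)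
    (hα : α ≠ 0) (hβ : β ≠ 0) (hΔ : Δ ≠ 0) (hpr : pr ≠ 0) (hd : d ≠ 0)
    (hEp : Ep ≠ 0) (hEm : Em ≠ 0)
    (h1 : Ep * Eα = eμ) (h2 : Em * Eβ = eμ) :
    (pr*α*β)^(m+1)/d/pr *
      ((α/Δ) * Ep * ((pr*α - ((m:ℝ)+1))*Gα/α^(m+2) + b^(m+1)*Eα/α)
        - (β/Δ) * Em * ((pr*β - ((m:ℝ)+1))*Gβ/β^(m+2) + b^(m+1)*Eβ/β))
    = (β/Δ)*Ep*((pr*β)^m/d*Gα*(pr*α - ((m:ℝ)+1)))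
        - (α/Δ)*Em*((pr*α)^m/d*Gβ*(pr*β - ((m:ℝ)+1))) := by
  have hEα : Eα = eμ / Ep := by rw [eq_div_iff hEp, mul_comm]; exact h1
  have hEβ : Eβ = eμ / Em := by rw [eq_div_iff hEm, mul_comm]; exact h2
  rw [hEα, hEβ]
  simp only [pow_succ, mul_pow]
  field_simp
  ring



lemma summable_c (K B : ℝ) :
    Summable (fun m : ℕ => K^(m+1)/((Nat.factorial m : ℝ) * (Nat.factorial (m+1) : ℝ)) * B^m) := by
  apply Summable.of_norm_bounded (g := fun m : ℕ => |K| * ((|K| * |B|)^m / (Nat.factorial m : ℝ)))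
    ((Real.summable_pow_div_factorial (|K| * |B|)).mul_left _)
  intro m
  have hf1 : (0:ℝ) < (Nat.factorial m : ℝ) := by exact_mod_cast Nat.factorial_pos m
  have hf2 : (1:ℝ) ≤ (Nat.factorial (m+1) : ℝ) := by
    exact_mod_cast Nat.one_le_iff_ne_zero.mpr (Nat.factorial_pos (m+1)).ne'
  rw [Real.norm_eq_abs, abs_mul, abs_div, abs_pow, abs_pow,
    abs_of_pos (by positivity : (0:ℝ) < (Nat.factorial m : ℝ) * (Nat.factorial (m+1) : ℝ))]
  have h2 : |K|^(m+1) / ((Nat.factorial m : ℝ) * (Nat.factorial (m+1) : ℝ)) * |B|^m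
      = (|K|^(m+1) * |B|^m) / ((Nat.factorial m : ℝ) * (Nat.factorial (m+1) : ℝ)) := by ring
  have h3 : |K| * ((|K| * |B|)^m / (Nat.factorial m : ℝ))
      = (|K|^(m+1) * |B|^m) / ((Nat.factorial m : ℝ) * 1) := by
    rw [mul_pow, pow_succ]; ring
  rw [h2, h3]
  gcongr

lemma summable_u {K z : ℝ} (c : ℝ) (hK : 0 ≤ K) (hz : 0 ≤ z) :
    Summable (fun m : ℕ => K ^ m / ((Nat.factorial m : ℝ) * (Nat.factorial (m+1) : ℝ))
      * G m z * (c - ((m:ℝ)+1))) := by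
  apply Summable.of_norm_bounded (g := fun m : ℕ => ((|c|+1) * z) * ((K*z)^m / (Nat.factorial m : ℝ)))
    ((Real.summable_pow_div_factorial (K*z)).mul_left _)
  intro m
  have hf1 : (0:ℝ) < (Nat.factorial m : ℝ) := by exact_mod_cast Nat.factorial_pos m
  have hf2 : (1:ℝ) ≤ (Nat.factorial (m+1) : ℝ) := by
    exact_mod_cast Nat.one_le_iff_ne_zero.mpr (Nat.factorial_pos (m+1)).ne'
  have hm0 : (0:ℝ) ≤ (m:ℝ) := Nat.cast_nonneg m
  have hG0 := G_nonneg m hz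
  have hG1 := G_le m hz
  rw [Real.norm_eq_abs, abs_mul, abs_of_nonneg (by positivity :
    (0:ℝ) ≤ K ^ m / ((Nat.factorial m : ℝ) * (Nat.factorial (m+1) : ℝ)) * G m z)]
  have hc : |c - ((m:ℝ)+1)| ≤ (|c|+1) * ((m:ℝ)+1) := by
    calc |c - ((m:ℝ)+1)| ≤ |c| + |((m:ℝ)+1)| := abs_sub _ _
      _ = |c| + ((m:ℝ)+1) := by rw [abs_of_pos (show (0:ℝ) < (m:ℝ)+1 by linarith)]
      _ ≤ (|c|+1) * ((m:ℝ)+1) := by nlinarith [abs_nonneg c]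
  calc K ^ m / ((Nat.factorial m : ℝ) * (Nat.factorial (m+1) : ℝ)) * G m z * |c - ((m:ℝ)+1)|
      ≤ K ^ m / ((Nat.factorial m : ℝ) * (Nat.factorial (m+1) : ℝ)) * (z^(m+1)/((m:ℝ)+1))
          * ((|c|+1) * ((m:ℝ)+1)) := by
        gcongr
    _ = (|c|+1) * (K^m * z^(m+1)) / ((Nat.factorial m : ℝ) * (Nat.factorial (m+1) : ℝ)) := by
        field_simp
    _ ≤ (|c|+1) * (K^m * z^(m+1)) / ((Nat.factorial m : ℝ) * 1) := by
        gcongr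
    _ = ((|c|+1) * z) * ((K*z)^m / (Nat.factorial m : ℝ)) := by
        rw [mul_pow, pow_succ]; field_simp


noncomputable def Fm (p lam μ q r b : ℝ) (m : ℕ) (y : ℝ) : ℝ :=
  Wq p lam μ q (b - y) * ((p * r - y) / r) * Real.exp (-μ * y) *
    ((μ * lam * r) ^ (m + 1) / ((Nat.factorial m : ℝ) * (Nat.factorial (m + 1) : ℝ)) * y ^ m)

lemma Wq_cont (p lam μ q : ℝ) : Continuous (Wq p lam μ q) := by
  unfold Wq; fun_prop

lemma Fm_cont (p lam μ q r b : ℝ) (m : ℕ) : Continuous (Fm p lam μ q r b m) := by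
  unfold Fm
  apply Continuous.mul
  apply Continuous.mul
  apply Continuous.mul
  · exact (Wq_cont p lam μ q).comp (continuous_const.sub continuous_id)
  · fun_prop
  · fun_prop
  · fun_prop

lemma core (p lam μ q r b : ℝ) (hp : 0 < p) (hlam : 0 < lam) (hμ : 0 < μ) (hq : 0 < q)
    (hr : 0 < r) (hb0 : 0 ≤ b) (hbr : b ≤ p * r) :
    (∫ y in (0:ℝ)..b, Wq p lam μ q (b - y) * ((p * r - y) / r) * Real.exp (-μ * y) *
        ∑' m : ℕ, (μ * lam * r) ^ (m + 1) / ((Nat.factorial m : ℝ) * (Nat.factorial (m + 1) : ℝ)) * y ^ m)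
    = Am p lam μ q * Real.exp (qp p lam μ q * b) *
        (∑' m : ℕ, (p * r * (qm p lam μ q + μ)) ^ m / ((Nat.factorial m : ℝ) * (Nat.factorial (m + 1) : ℝ)) *
          G m (b * (qp p lam μ q + μ)) * (p * r * (qp p lam μ q + μ) - ((m:ℝ) + 1)))
      - Ap p lam μ q * Real.exp (qm p lam μ q * b) *
        (∑' m : ℕ, (p * r * (qp p lam μ q + μ)) ^ m / ((Nat.factorial m : ℝ) * (Nat.factorial (m + 1) : ℝ)) *
          G m (b * (qm p lam μ q + μ)) * (p * r * (qm p lam μ q + μ) - ((m:ℝ) + 1))) := by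
  obtain ⟨hα, hβ, hΔ, hprod⟩ := scalars p lam μ q hp hlam hμ hq
  have hAP : Ap p lam μ q = (qp p lam μ q + μ) / (qp p lam μ q - qm p lam μ q) := by unfold Ap; rw [add_comm μ]
  have hAM : Am p lam μ q = (qm p lam μ q + μ) / (qp p lam μ q - qm p lam μ q) := by unfold Am; rw [add_comm μ]
  have hmlr : μ * lam * r = p * r * (qp p lam μ q + μ) * (qm p lam μ q + μ) := by linear_combination (-r) * hprod
  -- summability of the series of norms, for integral/tsum interchange
  set M₀ : ℝ := 1/p * (|Ap p lam μ q| * Real.exp (|qp p lam μ q| * b) + |Am p lam μ q| * Real.exp (|qm p lam μ q| * b))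
    with hM₀
  have hM₀0 : 0 ≤ M₀ := by positivity
  have hWb : ∀ y ∈ Set.Ioc (0:ℝ) b, |Wq p lam μ q (b - y)| ≤ M₀ := by
    intro y hy
    have hy0 : 0 < y := hy.1
    have hyb : y ≤ b := hy.2
    have hby : 0 ≤ b - y := by linarith
    have ebgen : ∀ c : ℝ, c * (b - y) ≤ |c| * b := by
      intro c
      calc c * (b - y) ≤ |c| * (b - y) := mul_le_mul_of_nonneg_right (le_abs_self c) hby
        _ ≤ |c| * b := mul_le_mul_of_nonneg_left (by linarith) (abs_nonneg c)
    have eb1 : Real.exp (qp p lam μ q * (b - y)) ≤ Real.exp (|qp p lam μ q| * b) :=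
      Real.exp_le_exp.mpr (ebgen _)
    have eb2 : Real.exp (qm p lam μ q * (b - y)) ≤ Real.exp (|qm p lam μ q| * b) :=
      Real.exp_le_exp.mpr (ebgen _)
    unfold Wq
    rw [hM₀]
    calc |1/p * (Ap p lam μ q * Real.exp (qp p lam μ q * (b - y)) - Am p lam μ q * Real.exp (qm p lam μ q * (b - y)))|
        = 1/p * |Ap p lam μ q * Real.exp (qp p lam μ q * (b - y)) - Am p lam μ q * Real.exp (qm p lam μ q * (b - y))| := by
          rw [abs_mul, abs_of_pos (by positivity : (0:ℝ) < 1/p)]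
      _ ≤ 1/p * (|Ap p lam μ q * Real.exp (qp p lam μ q * (b - y))| + |Am p lam μ q * Real.exp (qm p lam μ q * (b - y))|) := by
          gcongr
          exact abs_sub _ _
      _ = 1/p * (|Ap p lam μ q| * Real.exp (qp p lam μ q * (b - y)) + |Am p lam μ q| * Real.exp (qm p lam μ q * (b - y))) := by
          rw [abs_mul, abs_mul, Real.abs_exp, Real.abs_exp]
      _ ≤ 1/p * (|Ap p lam μ q| * Real.exp (|qp p lam μ q| * b) + |Am p lam μ q| * Real.exp (|qm p lam μ q| * b)) := by
          gcongr
  have hFnorm : ∀ m : ℕ, ∀ y ∈ Set.Ioc (0:ℝ) b,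
      ‖Fm p lam μ q r b m y‖ ≤ M₀ * p * ((μ * lam * r) ^ (m + 1) / ((Nat.factorial m : ℝ) * (Nat.factorial (m + 1) : ℝ)) * b ^ m) := by
    intro m y hy
    have hy0 : 0 < y := hy.1
    have hyb : y ≤ b := hy.2
    have h2 : |(p * r - y) / r| ≤ p := by
      rw [abs_of_nonneg (div_nonneg (by linarith) hr.le), div_le_iff₀ hr]
      linarith
    have h3 : Real.exp (-μ * y) ≤ 1 := Real.exp_le_one_iff.mpr (by nlinarith)
    have h4 : (μ * lam * r) ^ (m + 1) / ((Nat.factorial m : ℝ) * (Nat.factorial (m + 1) : ℝ)) * y ^ m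
        ≤ (μ * lam * r) ^ (m + 1) / ((Nat.factorial m : ℝ) * (Nat.factorial (m + 1) : ℝ)) * b ^ m := by
      gcongr
    unfold Fm
    rw [Real.norm_eq_abs, abs_mul, abs_mul, abs_mul, Real.abs_exp,
      abs_of_nonneg (by positivity : (0:ℝ) ≤ (μ * lam * r) ^ (m + 1) / ((Nat.factorial m : ℝ) * (Nat.factorial (m + 1) : ℝ)) * y ^ m)]
    calc |Wq p lam μ q (b - y)| * |(p * r - y) / r| * Real.exp (-μ * y) *
          ((μ * lam * r) ^ (m + 1) / ((Nat.factorial m : ℝ) * (Nat.factorial (m + 1) : ℝ)) * y ^ m)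
        ≤ M₀ * p * 1 * ((μ * lam * r) ^ (m + 1) / ((Nat.factorial m : ℝ) * (Nat.factorial (m + 1) : ℝ)) * b ^ m) := by
          gcongr
          exact hWb y hy
      _ = M₀ * p * ((μ * lam * r) ^ (m + 1) / ((Nat.factorial m : ℝ) * (Nat.factorial (m + 1) : ℝ)) * b ^ m) := by ring
  have hFint : ∀ m : ℕ, IntegrableOn (Fm p lam μ q r b m) (Set.Ioc (0:ℝ) b) := fun m =>
    (Fm_cont p lam μ q r b m).integrableOn_Ioc
  have hvol : (MeasureTheory.volume (Set.Ioc (0:ℝ) b)).toReal = b := by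
    rw [Real.volume_Ioc, ENNReal.toReal_ofReal (by linarith)]
    ring
  have hIb : ∀ m : ℕ, (∫ y in Set.Ioc (0:ℝ) b, ‖Fm p lam μ q r b m y‖)
      ≤ M₀ * p * ((μ * lam * r) ^ (m + 1) / ((Nat.factorial m : ℝ) * (Nat.factorial (m + 1) : ℝ)) * b ^ m) * b := by
    intro m
    calc (∫ y in Set.Ioc (0:ℝ) b, ‖Fm p lam μ q r b m y‖)
        ≤ ∫ _ in Set.Ioc (0:ℝ) b, M₀ * p * ((μ * lam * r) ^ (m + 1) / ((Nat.factorial m : ℝ) * (Nat.factorial (m + 1) : ℝ)) * b ^ m) :=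
          setIntegral_mono_on (hFint m).norm
            ((integrableOn_const_iff).mpr (Or.inr (by rw [Real.volume_Ioc]; exact ENNReal.ofReal_lt_top)))
            measurableSet_Ioc (hFnorm m)
      _ = M₀ * p * ((μ * lam * r) ^ (m + 1) / ((Nat.factorial m : ℝ) * (Nat.factorial (m + 1) : ℝ)) * b ^ m) * b := by
          rw [setIntegral_const, measureReal_def, hvol, smul_eq_mul, mul_comm]
  have hFsum : Summable (fun m : ℕ => ∫ y in Set.Ioc (0:ℝ) b, ‖Fm p lam μ q r b m y‖) := by
    apply Summable.of_nonneg_of_le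
      (fun m => MeasureTheory.integral_nonneg (fun y => norm_nonneg _)) hIb
    exact ((summable_c (μ * lam * r) b).mul_left (M₀ * p)).mul_right b
  have hterm : ∀ m : ℕ, (∫ y in Set.Ioc (0:ℝ) b, Fm p lam μ q r b m y)
      = Am p lam μ q * Real.exp (qp p lam μ q * b) *
          ((p * r * (qm p lam μ q + μ)) ^ m / ((Nat.factorial m : ℝ) * (Nat.factorial (m + 1) : ℝ)) * G m (b * (qp p lam μ q + μ)) * (p * r * (qp p lam μ q + μ) - ((m:ℝ) + 1)))
        - Ap p lam μ q * Real.exp (qm p lam μ q * b) *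
          ((p * r * (qp p lam μ q + μ)) ^ m / ((Nat.factorial m : ℝ) * (Nat.factorial (m + 1) : ℝ)) * G m (b * (qm p lam μ q + μ)) * (p * r * (qm p lam μ q + μ) - ((m:ℝ) + 1))) := by
    intro m
    rw [← intervalIntegral.integral_of_le hb0]
    have hpt : Set.EqOn (Fm p lam μ q r b m)
        (fun y => (μ * lam * r) ^ (m + 1) / ((Nat.factorial m : ℝ) * (Nat.factorial (m + 1) : ℝ)) / (p * r) *
          (Ap p lam μ q * Real.exp (qp p lam μ q * b) * ((p * r - y) * y ^ m * Real.exp (-((qp p lam μ q + μ) * y)))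
            - Am p lam μ q * Real.exp (qm p lam μ q * b) * ((p * r - y) * y ^ m * Real.exp (-((qm p lam μ q + μ) * y)))))
        (Set.uIcc (0:ℝ) b) := by
      intro y _
      have e1 : Real.exp (qp p lam μ q * (b - y)) * Real.exp (-μ * y)
          = Real.exp (qp p lam μ q * b) * Real.exp (-((qp p lam μ q + μ) * y)) := by
        rw [← Real.exp_add, ← Real.exp_add]; congr 1; ring
      have e2 : Real.exp (qm p lam μ q * (b - y)) * Real.exp (-μ * y)
          = Real.exp (qm p lam μ q * b) * Real.exp (-((qm p lam μ q + μ) * y)) := by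
        rw [← Real.exp_add, ← Real.exp_add]; congr 1; ring
      show Fm p lam μ q r b m y = _
      unfold Fm Wq
      linear_combination (1/p * Ap p lam μ q * ((p * r - y) / r) *
          ((μ * lam * r) ^ (m + 1) / ((Nat.factorial m : ℝ) * (Nat.factorial (m + 1) : ℝ)) * y ^ m)) * e1
        - (1/p * Am p lam μ q * ((p * r - y) / r) *
          ((μ * lam * r) ^ (m + 1) / ((Nat.factorial m : ℝ) * (Nat.factorial (m + 1) : ℝ)) * y ^ m)) * e2
    rw [intervalIntegral.integral_congr hpt]
    have i1 : IntervalIntegrable (fun y : ℝ => Ap p lam μ q * Real.exp (qp p lam μ q * b) *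
        ((p * r - y) * y ^ m * Real.exp (-((qp p lam μ q + μ) * y)))) MeasureTheory.volume 0 b := by
      apply Continuous.intervalIntegrable; fun_prop
    have i2 : IntervalIntegrable (fun y : ℝ => Am p lam μ q * Real.exp (qm p lam μ q * b) *
        ((p * r - y) * y ^ m * Real.exp (-((qm p lam μ q + μ) * y)))) MeasureTheory.volume 0 b := by
      apply Continuous.intervalIntegrable; fun_prop
    rw [intervalIntegral.integral_const_mul, intervalIntegral.integral_sub i1 i2,
      intervalIntegral.integral_const_mul, intervalIntegral.integral_const_mul,
      integral_lin_pow_exp m hα.ne' (p * r) b, integral_lin_pow_exp m hβ.ne' (p * r) b,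
      mul_comm ((qp p lam μ q + μ)) b, mul_comm ((qm p lam μ q + μ)) b, hmlr, hAP, hAM]
    exact key_alg m b (G m (b * (qp p lam μ q + μ))) (G m (b * (qm p lam μ q + μ))) (Real.exp (-(μ * b)))
      (Real.exp (-(b * (qp p lam μ q + μ)))) (Real.exp (-(b * (qm p lam μ q + μ))))
      hα.ne' hβ.ne' hΔ.ne' (by positivity) (by positivity)
      (Real.exp_ne_zero _) (Real.exp_ne_zero _)
      (by rw [← Real.exp_add]; congr 1; ring)
      (by rw [← Real.exp_add]; congr 1; ring)
  have hsu : Summable (fun m : ℕ => (p * r * (qm p lam μ q + μ)) ^ m / ((Nat.factorial m : ℝ) * (Nat.factorial (m + 1) : ℝ)) *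
      G m (b * (qp p lam μ q + μ)) * (p * r * (qp p lam μ q + μ) - ((m:ℝ) + 1))) :=
    summable_u (p * r * (qp p lam μ q + μ)) (by positivity) (mul_nonneg hb0 hα.le)
  have hsv : Summable (fun m : ℕ => (p * r * (qp p lam μ q + μ)) ^ m / ((Nat.factorial m : ℝ) * (Nat.factorial (m + 1) : ℝ)) *
      G m (b * (qm p lam μ q + μ)) * (p * r * (qm p lam μ q + μ) - ((m:ℝ) + 1))) :=
    summable_u (p * r * (qm p lam μ q + μ)) (by positivity) (mul_nonneg hb0 hβ.le)
  calc (∫ y in (0:ℝ)..b, Wq p lam μ q (b - y) * ((p * r - y) / r) * Real.exp (-μ * y) *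
        ∑' m : ℕ, (μ * lam * r) ^ (m + 1) / ((Nat.factorial m : ℝ) * (Nat.factorial (m + 1) : ℝ)) * y ^ m)
      = ∫ y in (0:ℝ)..b, ∑' m : ℕ, Fm p lam μ q r b m y := by
        apply intervalIntegral.integral_congr
        intro y _
        simp only [Fm]
        exact tsum_mul_left.symm
    _ = ∫ y in Set.Ioc (0:ℝ) b, ∑' m : ℕ, Fm p lam μ q r b m y :=
        intervalIntegral.integral_of_le hb0
    _ = ∑' m : ℕ, ∫ y in Set.Ioc (0:ℝ) b, Fm p lam μ q r b m y :=
        (MeasureTheory.integral_tsum_of_summable_integral_norm hFint hFsum).symm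
    _ = ∑' m : ℕ, (Am p lam μ q * Real.exp (qp p lam μ q * b) *
          ((p * r * (qm p lam μ q + μ)) ^ m / ((Nat.factorial m : ℝ) * (Nat.factorial (m + 1) : ℝ)) * G m (b * (qp p lam μ q + μ)) * (p * r * (qp p lam μ q + μ) - ((m:ℝ) + 1)))
        - Ap p lam μ q * Real.exp (qm p lam μ q * b) *
          ((p * r * (qp p lam μ q + μ)) ^ m / ((Nat.factorial m : ℝ) * (Nat.factorial (m + 1) : ℝ)) * G m (b * (qm p lam μ q + μ)) * (p * r * (qm p lam μ q + μ) - ((m:ℝ) + 1)))) :=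
        tsum_congr hterm
    _ = (∑' m : ℕ, Am p lam μ q * Real.exp (qp p lam μ q * b) *
          ((p * r * (qm p lam μ q + μ)) ^ m / ((Nat.factorial m : ℝ) * (Nat.factorial (m + 1) : ℝ)) * G m (b * (qp p lam μ q + μ)) * (p * r * (qp p lam μ q + μ) - ((m:ℝ) + 1))))
        - ∑' m : ℕ, Ap p lam μ q * Real.exp (qm p lam μ q * b) *
          ((p * r * (qp p lam μ q + μ)) ^ m / ((Nat.factorial m : ℝ) * (Nat.factorial (m + 1) : ℝ)) * G m (b * (qm p lam μ q + μ)) * (p * r * (qm p lam μ q + μ) - ((m:ℝ) + 1))) :=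
        Summable.tsum_sub (hsu.mul_left _) (hsv.mul_left _)
    _ = Am p lam μ q * Real.exp (qp p lam μ q * b) *
          (∑' m : ℕ, (p * r * (qm p lam μ q + μ)) ^ m / ((Nat.factorial m : ℝ) * (Nat.factorial (m + 1) : ℝ)) * G m (b * (qp p lam μ q + μ)) * (p * r * (qp p lam μ q + μ) - ((m:ℝ) + 1)))
        - Ap p lam μ q * Real.exp (qm p lam μ q * b) *
          (∑' m : ℕ, (p * r * (qp p lam μ q + μ)) ^ m / ((Nat.factorial m : ℝ) * (Nat.factorial (m + 1) : ℝ)) * G m (b * (qm p lam μ q + μ)) * (p * r * (qm p lam μ q + μ) - ((m:ℝ) + 1))) := by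
        rw [tsum_mul_left, tsum_mul_left]

end ParisianAux

theorem parisian_scale_function_CL_nonpos (p lam μ q r : ℝ)
    (hp : 0 < p) (hlam : 0 < lam) (hμ : 0 < μ) (hq : 0 < q) (hr : 0 < r)
    (x : ℝ) (hx₁ : -(p * r) ≤ x) (hx₂ : x ≤ 0) :
    Real.exp (-lam * r) *
        (p * Wq p lam μ q (x + p * r) +
          ∫ y in (0 : ℝ)..(p * r + x),
            Wq p lam μ q (x + p * r - y) * ((p * r - y) / r) * Real.exp (-μ * y) *
              ∑' m : ℕ, (μ * lam * r) ^ (m + 1) /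
                ((Nat.factorial m : ℝ) * (Nat.factorial (m + 1) : ℝ)) * y ^ m)
      = Real.exp (-lam * r) *
        (p * Wq p lam μ q (x + p * r) +
          Am p lam μ q * Real.exp (qp p lam μ q * (x + p * r)) *
            (∑' m : ℕ, (p * r * (qm p lam μ q + μ)) ^ m /
                ((Nat.factorial m : ℝ) * (Nat.factorial (m + 1) : ℝ)) *
              lowerGamma ((m : ℝ) + 1) ((p * r + x) * (qp p lam μ q + μ)) *
              (p * r * (qp p lam μ q + μ) - ((m : ℝ) + 1))) -
          Ap p lam μ q * Real.exp (qm p lam μ q * (x + p * r)) *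
            (∑' m : ℕ, (p * r * (qp p lam μ q + μ)) ^ m /
                ((Nat.factorial m : ℝ) * (Nat.factorial (m + 1) : ℝ)) *
              lowerGamma ((m : ℝ) + 1) ((p * r + x) * (qm p lam μ q + μ)) *
              (p * r * (qm p lam μ q + μ) - ((m : ℝ) + 1)))) := by
  have hb0 : (0:ℝ) ≤ p * r + x := by linarith
  have hbr : p * r + x ≤ p * r := by linarith
  simp only [show x + p * r = p * r + x from add_comm x (p * r)]
  simp only [lowerGamma_eq]
  rw [core p lam μ q r (p * r + x) hp hlam hμ hq hr hb0 hbr]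
  ring
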